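/- Let A > 0 and B > 0 be real numbers with A + B > 1. Then there exists a constant C = C(A, B) > 0 such that for every σ₀ ∈ ℝ, ∑_{k₁ ∈ ℤ∖{0}} ∑_{k₂ ∈ ℤ∖{0}} ⟨k₁⟩^{−A} ⟨k₂⟩^{−A} ⟨σ₀ − 2 k₁ k₂⟩^{−B} ≤ C; in particular the supremum over σ₀ ∈ ℝ of this double sum is finite. -/

import Mathlib

/-!
Since `⟨k₁k₂⟩ ≤ ⟨k₁⟩⟨k₂⟩`, the summand is at most `⟨n⟩^{-A} ⟨σ₀ - 2n⟩^{-B}` with `n = k₁k₂`, and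
at most `d(n) ≤ C_δ ⟨n⟩^δ` pairs share the same `n`. Taking `δ` so small that `α = A - δ > 0` and
`α + B > 1`, the double sum is bounded by the one-dimensional convolution
`∑ₙ ⟨n⟩^{-α} ⟨σ₀/2 - n⟩^{-B}`. This is bounded uniformly in `σ₀`, because
`⟨m⟩^{-α} ⟨τ - m⟩^{-B} ≤ ⟨m⟩^{-(α+B)} + ⟨τ - m⟩^{-(α+B)}` and `∑ₘ ⟨τ - m⟩^{-(α+B)}` is comparable
to `∑ₘ ⟨m - ⌊τ⌋⟩^{-(α+B)} = ∑ₘ ⟨m⟩^{-(α+B)}`.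
-/

open Real Finset

/-- The Japanese bracket `⟨x⟩ = (1 + x²)^{1/2}`. -/
noncomputable def jpn (x : ℝ) : ℝ := Real.sqrt (1 + x ^ 2)

lemma one_le_jpn (x : ℝ) : 1 ≤ jpn x :=
  one_le_sqrt.2 (le_add_of_nonneg_right (sq_nonneg x))

lemma jpn_pos (x : ℝ) : 0 < jpn x := one_pos.trans_le (one_le_jpn x)

lemma abs_le_jpn (x : ℝ) : |x| ≤ jpn x := by
  rw [jpn, ← sqrt_sq_eq_abs]
  exact sqrt_le_sqrt (by linarith)

lemma jpn_le_jpn {x y : ℝ} (h : |x| ≤ |y|) : jpn x ≤ jpn y :=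
  sqrt_le_sqrt (by nlinarith [sq_abs x, sq_abs y, abs_nonneg x])

lemma jpn_rpow_pos (x s : ℝ) : 0 < jpn x ^ s := rpow_pos_of_pos (jpn_pos x) s

lemma jpn_neg (x : ℝ) : jpn (-x) = jpn x := by simp [jpn]

lemma jpn_mul_le (x y : ℝ) : jpn (x * y) ≤ jpn x * jpn y := by
  rw [jpn, jpn, jpn, ← sqrt_mul (by positivity)]
  exact sqrt_le_sqrt (by nlinarith [sq_nonneg x, sq_nonneg y])

lemma sq_jpn (x : ℝ) : jpn x ^ 2 = 1 + x ^ 2 := sq_sqrt (by positivity)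

lemma jpn_add_le (x y : ℝ) : jpn (x + y) ≤ jpn x + |y| := by
  have hxy : x * y ≤ jpn x * |y| := calc
    x * y ≤ |x| * |y| := by rw [← abs_mul]; exact le_abs_self _
    _ ≤ jpn x * |y| := by gcongr; exact abs_le_jpn x
  rw [jpn, sqrt_le_left (add_nonneg (jpn_pos x).le (abs_nonneg y))]
  nlinarith [sq_jpn x, sq_abs y]

lemma jpn_rpow_neg_mul_jpn_rpow_neg_le (x y : ℝ) {s : ℝ} (hs : 0 ≤ s) :
    jpn x ^ (-s) * jpn y ^ (-s) ≤ jpn (x * y) ^ (-s) := by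
  rw [← mul_rpow (jpn_pos x).le (jpn_pos y).le]
  exact rpow_le_rpow_of_nonpos (jpn_pos _) (jpn_mul_le x y) (neg_nonpos.2 hs)

lemma jpn_sub_two_mul_rpow_neg_le (σ x : ℝ) {s : ℝ} (hs : 0 ≤ s) :
    jpn (σ - 2 * x) ^ (-s) ≤ jpn (σ / 2 - x) ^ (-s) := by
  refine rpow_le_rpow_of_nonpos (jpn_pos _) (jpn_le_jpn ?_) (neg_nonpos.2 hs)
  rw [show σ - 2 * x = 2 * (σ / 2 - x) by ring, abs_mul, abs_two]
  linarith [abs_nonneg (σ / 2 - x)]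

lemma jpn_sub_floor_le (τ : ℝ) (m : ℤ) : jpn (m - ⌊τ⌋) ≤ 2 * jpn (τ - m) := calc
  jpn (m - ⌊τ⌋) = jpn (-(τ - m) + Int.fract τ) := by rw [Int.fract]; ring_nf
  _ ≤ jpn (τ - m) + 1 := by
    rw [← jpn_neg (τ - m)]
    grw [jpn_add_le, abs_of_nonneg (Int.fract_nonneg τ), Int.fract_lt_one τ]
  _ ≤ 2 * jpn (τ - m) := by linarith [one_le_jpn (τ - m)]

lemma jpn_sub_rpow_neg_le (τ : ℝ) (m : ℤ) {s : ℝ} (hs : 0 ≤ s) :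
    jpn (τ - m) ^ (-s) ≤ 2 ^ s * jpn (m - ⌊τ⌋) ^ (-s) := calc
  jpn (τ - m) ^ (-s) ≤ (jpn (m - ⌊τ⌋) / 2) ^ (-s) :=
    rpow_le_rpow_of_nonpos (half_pos (jpn_pos _)) (by linarith [jpn_sub_floor_le τ m])
      (neg_nonpos.2 hs)
  _ = 2 ^ s * jpn (m - ⌊τ⌋) ^ (-s) := by
    rw [div_rpow (jpn_pos _).le zero_le_two, rpow_neg zero_le_two, div_inv_eq_mul,
      mul_comm]

lemma summable_jpn_rpow_neg {s : ℝ} (hs : 1 < s) : Summable fun m : ℤ => jpn m ^ (-s) := by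
  refine (summable_abs_int_rpow hs).of_norm_bounded_eventually ?_
  filter_upwards [Filter.eventually_cofinite_ne 0] with m hm
  rw [Real.norm_of_nonneg (jpn_rpow_pos _ _).le]
  exact rpow_le_rpow_of_nonpos (abs_pos.2 (Int.cast_ne_zero.2 hm)) (abs_le_jpn m) (by linarith)

lemma summable_jpn_sub_rpow_neg {s : ℝ} (hs : 1 < s) (a : ℤ) :
    Summable fun m : ℤ => jpn (m - a) ^ (-s) := by
  simpa [Function.comp_def] using (Equiv.subRight a).summable_iff.2 (summable_jpn_rpow_neg hs)

lemma tsum_jpn_sub_rpow_neg (s : ℝ) (a : ℤ) :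
    ∑' m : ℤ, jpn (m - a) ^ (-s) = ∑' m : ℤ, jpn m ^ (-s) := by
  simpa using (Equiv.subRight a).tsum_eq fun m : ℤ => jpn m ^ (-s)

lemma rpow_neg_mul_rpow_neg_le_add {x y α β : ℝ} (hx : 0 < x) (hy : 0 < y) (hα : 0 ≤ α)
    (hβ : 0 ≤ β) : x ^ (-α) * y ^ (-β) ≤ x ^ (-(α + β)) + y ^ (-(α + β)) := by
  rcases le_total x y with hxy | hyx
  · calc x ^ (-α) * y ^ (-β) ≤ x ^ (-α) * x ^ (-β) := by
          gcongr _ * ?_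
          exact rpow_le_rpow_of_nonpos hx hxy (by linarith)
      _ = x ^ (-(α + β)) := by rw [← rpow_add hx, neg_add]
      _ ≤ _ := le_add_of_nonneg_right (by positivity)
  · calc x ^ (-α) * y ^ (-β) ≤ y ^ (-α) * y ^ (-β) := by
          gcongr ?_ * _
          exact rpow_le_rpow_of_nonpos hy hyx (by linarith)
      _ = y ^ (-(α + β)) := by rw [← rpow_add hy, neg_add]
      _ ≤ _ := le_add_of_nonneg_left (by positivity)

theorem exists_tsum_jpn_rpow_neg_mul_le {α β : ℝ} (hα : 0 < α) (hβ : 0 < β) (hαβ : 1 < α + β) :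
    ∃ C, 0 < C ∧ ∀ τ : ℝ, Summable (fun m : ℤ => jpn m ^ (-α) * jpn (τ - m) ^ (-β)) ∧
      ∑' m : ℤ, jpn m ^ (-α) * jpn (τ - m) ^ (-β) ≤ C := by
  set s := α + β
  have hZ : Summable fun m : ℤ => jpn m ^ (-s) := summable_jpn_rpow_neg hαβ
  refine ⟨(1 + 2 ^ s) * ∑' m : ℤ, jpn m ^ (-s),
    mul_pos (by positivity) (hZ.tsum_pos (fun m => (jpn_rpow_pos _ _).le) 0 (jpn_rpow_pos _ _)),
    fun τ => ?_⟩
  -- the convolution is dominated by the sum of a centred and a shifted copy of `⟨m⟩^{-s}`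
  set g : ℤ → ℝ := fun m => jpn m ^ (-s) + 2 ^ s * jpn (m - ⌊τ⌋) ^ (-s)
  have hg : Summable g := hZ.add ((summable_jpn_sub_rpow_neg hαβ _).mul_left _)
  have hle : ∀ m : ℤ, jpn m ^ (-α) * jpn (τ - m) ^ (-β) ≤ g m := fun m => calc
    _ ≤ jpn m ^ (-s) + jpn (τ - m) ^ (-s) :=
      rpow_neg_mul_rpow_neg_le_add (jpn_pos _) (jpn_pos _) hα.le hβ.le
    _ ≤ g m := add_le_add_right (jpn_sub_rpow_neg_le τ m (by positivity)) _
  have hsum := hg.of_nonneg_of_le (fun m => (mul_pos (jpn_rpow_pos _ _) (jpn_rpow_pos _ _)).le) hle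
  refine ⟨hsum, (hsum.tsum_le_tsum hle hg).trans_eq ?_⟩
  rw [hZ.tsum_add ((summable_jpn_sub_rpow_neg hαβ _).mul_left _), tsum_mul_left,
    tsum_jpn_sub_rpow_neg]
  ring

theorem Finset.prod_le_pow_card_filter_mul_prod {ι : Type*} (s : Finset ι) (P : ι → Prop)
    [DecidablePred P] {f g : ι → ℝ} {M : ℝ} (hf : ∀ i ∈ s, 0 ≤ f i)
    (hP : ∀ i ∈ s, P i → f i ≤ M * g i) (hnP : ∀ i ∈ s, ¬P i → f i ≤ g i) :
    ∏ i ∈ s, f i ≤ M ^ #(s.filter P) * ∏ i ∈ s, g i := calc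
  ∏ i ∈ s, f i ≤ ∏ i ∈ s, (if P i then M else 1) * g i := by
    refine prod_le_prod hf fun i hi => ?_
    split_ifs with h
    · exact hP i hi h
    · rw [one_mul]; exact hnP i hi h
  _ = M ^ #(s.filter P) * ∏ i ∈ s, g i := by
    rw [prod_mul_distrib, prod_ite, prod_const, prod_const_one, mul_one]

lemma natCast_add_one_le_mul_rpow_pow {δ x : ℝ} (hδ : 0 < δ) (hx : 2 ≤ x) (a : ℕ) :
    (a + 1 : ℝ) ≤ (1 + 1 / (δ * log 2)) * (x ^ a) ^ δ := by
  set c := δ * log 2 with hc_def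
  have hc : 0 < c := mul_pos hδ (log_pos one_lt_two)
  have hexp : 1 + a * c ≤ (x ^ a) ^ δ := calc
    1 + a * c ≤ exp (a * c) := by linarith [add_one_le_exp (a * c)]
    _ = (2 ^ a) ^ δ := by
      rw [← rpow_natCast, ← rpow_mul zero_le_two, rpow_def_of_pos two_pos, hc_def]
      ring_nf
    _ ≤ (x ^ a) ^ δ := by gcongr
  calc (a + 1 : ℝ) ≤ (1 + 1 / c) * (1 + a * c) := by
        have : (1 + 1 / c) * (1 + a * c) = a + 1 + (a * c + 1 / c) := by field_simp; ring
        rw [this]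
        exact le_add_of_nonneg_right (by positivity)
    _ ≤ (1 + 1 / c) * (x ^ a) ^ δ := by gcongr

lemma natCast_add_one_le_rpow_pow {δ x : ℝ} (hδ : 0 < δ) (hx : 2 ^ (1 / δ) ≤ x) (a : ℕ) :
    (a + 1 : ℝ) ≤ (x ^ a) ^ δ := calc
  (a + 1 : ℝ) ≤ 2 ^ a := by exact_mod_cast Nat.lt_two_pow_self
  _ = ((2 ^ (1 / δ)) ^ a) ^ δ := by
    rw [← rpow_natCast, ← rpow_natCast, ← rpow_mul zero_le_two, ← rpow_mul zero_le_two]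
    congr 1
    field_simp
  _ ≤ (x ^ a) ^ δ := by gcongr

theorem exists_card_divisors_le_mul_rpow {δ : ℝ} (hδ : 0 < δ) :
    ∃ C : ℝ, 0 < C ∧ ∀ n : ℕ, (#n.divisors : ℝ) ≤ C * n ^ δ := by
  set M := 1 + 1 / (δ * log 2)
  have hM : 1 ≤ M := le_add_of_nonneg_right (by have := log_pos one_lt_two; positivity)
  set N := ⌈(2 : ℝ) ^ (1 / δ)⌉₊
  refine ⟨M ^ N, by positivity, fun n => ?_⟩
  rcases eq_or_ne n 0 with rfl | hn
  · simp [zero_rpow hδ.ne']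
  -- `d(n) / n^δ = ∏_{p^a ∥ n} (a + 1) / p^{aδ}`; only primes `p < N` give factors `> 1`
  have hn_rpow : (n : ℝ) ^ δ = ∏ p ∈ n.primeFactors, ((p : ℝ) ^ n.factorization p) ^ δ := by
    rw [finsetProd_rpow _ _ fun p _ => by positivity]
    exact_mod_cast congrArg (fun m : ℕ => (m : ℝ) ^ δ) (Nat.prod_factorization_pow_eq_self hn).symm
  have hcard : #(n.primeFactors.filter (· < N)) ≤ N :=
    (card_le_card fun p hp => mem_range.2 (mem_filter.1 hp).2).trans (card_range N).le
  calc (#n.divisors : ℝ) = ∏ p ∈ n.primeFactors, ((n.factorization p : ℝ) + 1) := by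
        rw [Nat.card_divisors hn]; push_cast; rfl
    _ ≤ M ^ #(n.primeFactors.filter (· < N)) * (n : ℝ) ^ δ := by
        rw [hn_rpow]
        refine prod_le_pow_card_filter_mul_prod _ _ (fun p _ => by positivity)
          (fun p hp _ => natCast_add_one_le_mul_rpow_pow hδ ?_ _)
          (fun p _ hpN => natCast_add_one_le_rpow_pow hδ ((Nat.le_ceil _).trans ?_) _)
        · exact_mod_cast (Nat.prime_of_mem_primeFactors hp).two_le
        · exact_mod_cast not_lt.1 hpN
    _ ≤ M ^ N * (n : ℝ) ^ δ := by gcongr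

lemma Int.card_divisors (z : ℤ) : #z.divisors = 2 * #z.natAbs.divisors := by
  rw [Int.divisors, card_disjUnion, card_map, card_map, two_mul]

theorem Int.exists_card_divisors_le_mul_jpn_rpow {δ : ℝ} (hδ : 0 < δ) :
    ∃ C : ℝ, 0 < C ∧ ∀ n : ℤ, (#n.divisors : ℝ) ≤ C * jpn n ^ δ := by
  obtain ⟨C, hC, hdiv⟩ := exists_card_divisors_le_mul_rpow hδ
  refine ⟨2 * C, by positivity, fun n => ?_⟩
  calc (#n.divisors : ℝ) = 2 * #n.natAbs.divisors := by rw [Int.card_divisors]; push_cast; rfl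
    _ ≤ 2 * (C * |(n : ℝ)| ^ δ) := by
      rw [← Int.cast_abs, ← Nat.cast_natAbs]; gcongr; exact hdiv _
    _ ≤ 2 * C * jpn n ^ δ := by rw [mul_assoc]; gcongr; exact abs_le_jpn _

lemma card_filter_mul_eq_le_card_divisors (u : Finset ({k : ℤ // k ≠ 0} × {k : ℤ // k ≠ 0}))
    (n : ℤ) : #(u.filter fun p => (p.1 : ℤ) * p.2 = n) ≤ #n.divisors := by
  refine card_le_card_of_injOn (fun p => (p.1 : ℤ)) (fun p hp => ?_) fun p hp q hq hpq => ?_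
  · obtain ⟨-, hpn⟩ := mem_filter.1 hp
    exact Int.mem_divisors.2 ⟨⟨p.2, hpn.symm⟩, hpn ▸ mul_ne_zero p.1.2 p.2.2⟩
  · have h₂ : (p.2 : ℤ) = q.2 := mul_left_cancel₀ p.1.2 <| by
      rw [(mem_filter.1 hp).2, show (p.1 : ℤ) = q.1 from hpq, (mem_filter.1 hq).2]
    exact Prod.ext (Subtype.ext hpq) (Subtype.ext h₂)

lemma sum_comp_le_tsum_of_card_fiber_le {α β : Type*} [DecidableEq β] {f : α → β}
    {g c : β → ℝ} (hg : 0 ≤ g) (hfib : ∀ (u : Finset α) (b : β), (#(u.filter (f · = b)) : ℝ) ≤ c b)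
    (hcg : Summable fun b => c b * g b) (u : Finset α) :
    ∑ a ∈ u, g (f a) ≤ ∑' b, c b * g b := by
  have hc : ∀ b, 0 ≤ c b := fun b => by simpa using hfib ∅ b
  rw [sum_comp]
  calc ∑ b ∈ u.image f, #(u.filter (f · = b)) • g b ≤ ∑ b ∈ u.image f, c b * g b :=
        sum_le_sum fun b _ => by
          rw [nsmul_eq_mul]; exact mul_le_mul_of_nonneg_right (hfib u b) (hg b)
    _ ≤ ∑' b, c b * g b := hcg.sum_le_tsum _ fun b _ => mul_nonneg (hc b) (hg b)

lemma sum_jpn_rpow_neg_mul_le_mul_tsum {A B δ Cd : ℝ} (hA : 0 ≤ A) (hB : 0 ≤ B) (hCd : 0 ≤ Cd)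
    (hdiv : ∀ n : ℤ, (#n.divisors : ℝ) ≤ Cd * jpn n ^ δ) {σ₀ : ℝ}
    (hG : Summable fun n : ℤ => jpn n ^ (-(A - δ)) * jpn (σ₀ / 2 - n) ^ (-B))
    (u : Finset ({k : ℤ // k ≠ 0} × {k : ℤ // k ≠ 0})) :
    ∑ p ∈ u, jpn ((p.1 : ℤ) : ℝ) ^ (-A) * jpn ((p.2 : ℤ) : ℝ) ^ (-A)
        * jpn (σ₀ - 2 * ((p.1 : ℤ) : ℝ) * ((p.2 : ℤ) : ℝ)) ^ (-B)
      ≤ Cd * ∑' n : ℤ, jpn n ^ (-(A - δ)) * jpn (σ₀ / 2 - n) ^ (-B) := by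
  set H : ℤ → ℝ := fun n => jpn n ^ (-A) * jpn (σ₀ - 2 * n) ^ (-B)
  have hH0 : ∀ n, 0 ≤ H n := fun n => (mul_pos (jpn_rpow_pos _ _) (jpn_rpow_pos _ _)).le
  have hH : ∀ n : ℤ, Cd * jpn n ^ δ * H n ≤
      Cd * (jpn n ^ (-(A - δ)) * jpn (σ₀ / 2 - n) ^ (-B)) := fun n => by
    rw [mul_assoc, ← mul_assoc (jpn n ^ δ), ← rpow_add (jpn_pos _), show δ + -A = -(A - δ) by ring]
    exact mul_le_mul_of_nonneg_left (mul_le_mul_of_nonneg_left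
      (jpn_sub_two_mul_rpow_neg_le _ _ hB) (jpn_rpow_pos _ _).le) hCd
  have hHsum : Summable fun n : ℤ => Cd * jpn n ^ δ * H n :=
    (hG.mul_left Cd).of_nonneg_of_le
      (fun n => mul_nonneg (mul_nonneg hCd (jpn_rpow_pos _ _).le) (hH0 n)) hH
  calc _ ≤ ∑ p ∈ u, H (p.1 * p.2) := sum_le_sum fun p _ => by
        simp only [H, Int.cast_mul, ← mul_assoc]
        exact mul_le_mul_of_nonneg_right (jpn_rpow_neg_mul_jpn_rpow_neg_le _ _ hA)
          (jpn_rpow_pos _ _).le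
    _ ≤ ∑' n : ℤ, Cd * jpn n ^ δ * H n :=
      sum_comp_le_tsum_of_card_fiber_le hH0 (fun u n =>
        (Nat.cast_le.2 (card_filter_mul_eq_le_card_divisors u n)).trans (hdiv n)) hHsum u
    _ ≤ _ := by rw [← tsum_mul_left]; exact hHsum.tsum_le_tsum hH (hG.mul_left Cd)

/-- Divisor-counting sum bound: for `A, B > 0` with `A + B > 1`, the double sum
`∑_{k₁ ≠ 0} ∑_{k₂ ≠ 0} ⟨k₁⟩^{-A} ⟨k₂⟩^{-A} ⟨σ₀ - 2k₁k₂⟩^{-B}` is bounded uniformly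
in `σ₀ ∈ ℝ`. -/
theorem divisor_sum_bound (A B : ℝ) (hA : 0 < A) (hB : 0 < B) (hAB : 1 < A + B) :
    ∃ C : ℝ, 0 < C ∧ ∀ σ₀ : ℝ,
      (∑' k₁ : {k : ℤ // k ≠ 0}, ∑' k₂ : {k : ℤ // k ≠ 0},
          jpn ((k₁ : ℤ) : ℝ) ^ (-A) * jpn ((k₂ : ℤ) : ℝ) ^ (-A)
            * jpn (σ₀ - 2 * ((k₁ : ℤ) : ℝ) * ((k₂ : ℤ) : ℝ)) ^ (-B))
        ≤ C := by
  obtain ⟨δ, hδ, hAδ, hAδB⟩ : ∃ δ : ℝ, 0 < δ ∧ 0 < A - δ ∧ 1 < A - δ + B :=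
    ⟨min A (A + B - 1) / 2, by positivity, by linarith [min_le_left A (A + B - 1)],
      by linarith [min_le_right A (A + B - 1)]⟩
  obtain ⟨Cd, hCd, hdiv⟩ := Int.exists_card_divisors_le_mul_jpn_rpow hδ
  obtain ⟨Cc, hCc, hconv⟩ := exists_tsum_jpn_rpow_neg_mul_le hAδ hB hAδB
  refine ⟨Cd * Cc, by positivity, fun σ₀ => ?_⟩
  obtain ⟨hG, hGC⟩ := hconv (σ₀ / 2)
  have hpartial := fun u => (sum_jpn_rpow_neg_mul_le_mul_tsum hA.le hB.le hCd.le hdiv hG u).trans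
    (mul_le_mul_of_nonneg_left hGC hCd.le)
  have hF := summable_of_sum_le
    (fun p => (mul_pos (mul_pos (jpn_rpow_pos _ _) (jpn_rpow_pos _ _)) (jpn_rpow_pos _ _)).le)
    hpartial
  rw [← hF.tsum_prod' hF.prod_factor]
  exact hF.tsum_le_of_sum_le hpartial
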